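/- arXiv:2306.04089 — 3 statements merged into one kernel-verified Lean document; each statement's English description precedes it below -/
import Mathlib

section
/- The convex hull of two zonotopes Z₁ = ⟨c₁, G₁⟩ and Z₂ = ⟨c₂, G₂⟩ in ℝⁿ, where G₁ has γ₁ generators, G₂ has γ₂ ≥ γ₁ generators, G₂⁽¹⁾ denotes the first γ₁ columns of G₂ and G₂⁽²⁾ the remaining columns, is contained in the zonotope with center 0.5(c₁+c₂) and generator matrix [0.5(G₁+G₂⁽¹⁾), 0.5(G₁−G₂⁽¹⁾), 0.5(c₁−c₂), G₂⁽²⁾]. -/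
lemma sum_castLE_aux {γ₁ γ₂ : ℕ} (h : γ₁ ≤ γ₂) (f : Fin γ₂ → ℝ) :
    ∑ i : Fin γ₁, f (Fin.castLE h i) = ∑ i : Fin γ₂, if (i : ℕ) < γ₁ then f i else 0 := by
  have hmap : (Finset.univ.map (Fin.castLEEmb h)) =
      Finset.univ.filter (fun i : Fin γ₂ => (i : ℕ) < γ₁) := by
    ext i
    simp only [Finset.mem_map, Finset.mem_filter, Finset.mem_univ, true_and,
      Fin.castLEEmb_apply]
    constructor
    · rintro ⟨a, rfl⟩; exact a.isLt
    · intro hi; exact ⟨⟨i, hi⟩, rfl⟩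
  rw [← Finset.sum_filter, ← hmap, Finset.sum_map]
  rfl

/-- The convex hull of two zonotopes `⟨c₁,G₁⟩` and `⟨c₂,G₂⟩` (with `γ₁ ≤ γ₂`) is contained in
the zonotope with center `0.5(c₁+c₂)` and generators
`[0.5(G₁+G₂⁽¹⁾), 0.5(G₁−G₂⁽¹⁾), 0.5(c₁−c₂), G₂⁽²⁾]`. -/
theorem zonotope_convexHull_enclosure (n γ₁ γ₂ : ℕ) (h : γ₁ ≤ γ₂) (c₁ c₂ : Fin n → ℝ)
    (G₁ : Matrix (Fin n) (Fin γ₁) ℝ) (G₂ : Matrix (Fin n) (Fin γ₂) ℝ) :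
    convexHull ℝ
      ({x : Fin n → ℝ | ∃ α : Fin γ₁ → ℝ, (∀ i, α i ∈ Set.Icc (-1 : ℝ) 1) ∧ x = c₁ + G₁.mulVec α} ∪
       {x : Fin n → ℝ | ∃ α : Fin γ₂ → ℝ, (∀ i, α i ∈ Set.Icc (-1 : ℝ) 1) ∧ x = c₂ + G₂.mulVec α})
    ⊆ {x : Fin n → ℝ | ∃ (a b : Fin γ₁ → ℝ) (s : ℝ) (t : Fin γ₂ → ℝ),
        (∀ i, a i ∈ Set.Icc (-1 : ℝ) 1) ∧ (∀ i, b i ∈ Set.Icc (-1 : ℝ) 1) ∧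
        s ∈ Set.Icc (-1 : ℝ) 1 ∧ (∀ i, t i ∈ Set.Icc (-1 : ℝ) 1) ∧
        x = (fun j => (c₁ j + c₂ j) / 2
              + (∑ i : Fin γ₁, (G₁ j i + G₂ j (Fin.castLE h i)) / 2 * a i)
              + (∑ i : Fin γ₁, (G₁ j i - G₂ j (Fin.castLE h i)) / 2 * b i)
              + (c₁ j - c₂ j) / 2 * s
              + (∑ i : Fin γ₂, if γ₁ ≤ (i : ℕ) then G₂ j i * t i else 0))} := by
  apply convexHull_min
  · rintro x (⟨α, hα, rfl⟩ | ⟨α, hα, rfl⟩)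
    · refine ⟨α, α, 1, 0, hα, hα, by norm_num, fun i => by norm_num, ?_⟩
      funext j
      simp only [Matrix.mulVec, dotProduct, Pi.add_apply, Pi.zero_apply, mul_zero,
        ite_self, Finset.sum_const_zero, mul_one, add_zero]
      have hS : (∑ i : Fin γ₁, (G₁ j i + G₂ j (Fin.castLE h i)) / 2 * α i)
          + (∑ i : Fin γ₁, (G₁ j i - G₂ j (Fin.castLE h i)) / 2 * α i)
          = ∑ i : Fin γ₁, G₁ j i * α i := by
        rw [← Finset.sum_add_distrib]
        exact Finset.sum_congr rfl fun i _ => by ring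
      linarith [hS]
    · refine ⟨fun i => α (Fin.castLE h i), fun i => -α (Fin.castLE h i), -1, α,
        fun i => hα _, fun i => ?_, by norm_num, hα, ?_⟩
      · have := hα (Fin.castLE h i)
        simp only [Set.mem_Icc] at this ⊢
        constructor <;> linarith [this.1, this.2]
      funext j
      simp only [Matrix.mulVec, dotProduct, Pi.add_apply]
      have hS : (∑ i : Fin γ₁, (G₁ j i + G₂ j (Fin.castLE h i)) / 2 * α (Fin.castLE h i))
          + (∑ i : Fin γ₁, (G₁ j i - G₂ j (Fin.castLE h i)) / 2 * -α (Fin.castLE h i))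
          = ∑ i : Fin γ₁, G₂ j (Fin.castLE h i) * α (Fin.castLE h i) := by
        rw [← Finset.sum_add_distrib]
        exact Finset.sum_congr rfl fun i _ => by ring
      have hS2 := sum_castLE_aux h (fun i => G₂ j i * α i)
      have hS3 : (∑ i : Fin γ₂, if (i : ℕ) < γ₁ then G₂ j i * α i else 0)
          + (∑ i : Fin γ₂, if γ₁ ≤ (i : ℕ) then G₂ j i * α i else 0)
          = ∑ i : Fin γ₂, G₂ j i * α i := by
        rw [← Finset.sum_add_distrib]
        refine Finset.sum_congr rfl fun i _ => ?_
        split_ifs with h1 h2 <;> first | omega | ring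
      linarith [hS, hS2, hS3]
  · rintro x ⟨a, b, s, t, ha, hb, hs, ht, rfl⟩ y ⟨a', b', s', t', ha', hb', hs', ht', rfl⟩
      θ θ' hθ hθ' hθθ
    refine ⟨fun i => θ * a i + θ' * a' i, fun i => θ * b i + θ' * b' i, θ * s + θ' * s',
      fun i => θ * t i + θ' * t' i, ?_, ?_, ?_, ?_, ?_⟩
    · intro i
      simpa using (convex_Icc (-1 : ℝ) 1) (ha i) (ha' i) hθ hθ' hθθ
    · intro i
      simpa using (convex_Icc (-1 : ℝ) 1) (hb i) (hb' i) hθ hθ' hθθ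
    · simpa using (convex_Icc (-1 : ℝ) 1) hs hs' hθ hθ' hθθ
    · intro i
      simpa using (convex_Icc (-1 : ℝ) 1) (ht i) (ht' i) hθ hθ' hθθ
    funext j
    simp only [Pi.add_apply, Pi.smul_apply, smul_eq_mul]
    have e1 : ∑ i : Fin γ₁, (G₁ j i + G₂ j (Fin.castLE h i)) / 2 * (θ * a i + θ' * a' i)
        = θ * (∑ i : Fin γ₁, (G₁ j i + G₂ j (Fin.castLE h i)) / 2 * a i)
          + θ' * (∑ i : Fin γ₁, (G₁ j i + G₂ j (Fin.castLE h i)) / 2 * a' i) := by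
      rw [Finset.mul_sum, Finset.mul_sum, ← Finset.sum_add_distrib]
      exact Finset.sum_congr rfl fun i _ => by ring
    have e2 : ∑ i : Fin γ₁, (G₁ j i - G₂ j (Fin.castLE h i)) / 2 * (θ * b i + θ' * b' i)
        = θ * (∑ i : Fin γ₁, (G₁ j i - G₂ j (Fin.castLE h i)) / 2 * b i)
          + θ' * (∑ i : Fin γ₁, (G₁ j i - G₂ j (Fin.castLE h i)) / 2 * b' i) := by
      rw [Finset.mul_sum, Finset.mul_sum, ← Finset.sum_add_distrib]
      exact Finset.sum_congr rfl fun i _ => by ring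
    have e3 : (∑ i : Fin γ₂, if γ₁ ≤ (i : ℕ) then G₂ j i * (θ * t i + θ' * t' i) else 0)
        = θ * (∑ i : Fin γ₂, if γ₁ ≤ (i : ℕ) then G₂ j i * t i else 0)
          + θ' * (∑ i : Fin γ₂, if γ₁ ≤ (i : ℕ) then G₂ j i * t' i else 0) := by
      rw [Finset.mul_sum, Finset.mul_sum, ← Finset.sum_add_distrib]
      refine Finset.sum_congr rfl fun i _ => ?_
      split_ifs <;> ring
    rw [e1, e2, e3]
    have key : ∀ C D A1 A2 A3 B1 B2 B3 u u' : ℝ,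
        θ * (C + A1 + A2 + D * u + A3) + θ' * (C + B1 + B2 + D * u' + B3)
        = C + (θ * A1 + θ' * B1) + (θ * A2 + θ' * B2) + D * (θ * u + θ' * u')
          + (θ * A3 + θ' * B3) := by
      intro C D A1 A2 A3 B1 B2 B3 u u'
      have hθ'' : θ' = 1 - θ := by linarith
      subst hθ''
      ring
    exact key _ _ _ _ _ _ _ _ _ _
end

section
/- Factor-space safety certificate (time-point case): let R = ⟨c, G⟩ ⊂ ℝⁿ be a zonotope whose generator columns are partitioned into an index tuple H (dependent generators) and its complement K (error generators), and let P = {x | C x ≤ d} be a polytope. Define the polytope in factor space K' = {α̃ | [C G_{(·,H)} 0] α̃ ≤ d − C c + Σ_{j∈K} |C G_{(·,j)}|}, where the absolute value of the row vector C G_{(·,j)} is taken component-wise and summed into a vector. Then for every α̃ ∈ [−1,1]^γ with α̃ ∉ K', the point G_{(·,H)} α̃_H + c + Σ_{j∈K} G_{(·,j)} β_j lies outside P for all β_j ∈ [−1,1]. -/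
/-- Factor-space safety certificate (time-point case): if a factor vector
`α̃ ∈ [−1,1]^γ` lies outside the factor-space polytope
`K' = {α̃ | [C G_{(·,H)} 0] α̃ ≤ d − C c + Σ_{j∈K} |C G_{(·,j)}|}`
(where `K = Hᶜ` are the error generators), then the corresponding reachable point
`c + Σ_{j∈H} G_j α̃_j + Σ_{j∈K} G_j β_j` lies outside the polytope `P = {x | C x ≤ d}`
for every choice of error factors `β ∈ [−1,1]^γ`. -/
theorem factor_space_safety (n γ s : ℕ) (c : Fin n → ℝ) (G : Matrix (Fin n) (Fin γ) ℝ)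
    (H : Finset (Fin γ)) (C : Matrix (Fin s) (Fin n) ℝ) (d : Fin s → ℝ)
    (α : Fin γ → ℝ) (hα : ∀ j, α j ∈ Set.Icc (-1 : ℝ) 1)
    (hnot : ¬ ∀ r : Fin s, (∑ j ∈ H, (∑ k, C r k * G k j) * α j)
        ≤ d r - (∑ k, C r k * c k) + ∑ j ∈ Hᶜ, |∑ k, C r k * G k j|)
    (β : Fin γ → ℝ) (hβ : ∀ j, β j ∈ Set.Icc (-1 : ℝ) 1) :
    ¬ ∀ r : Fin s, ∑ k, C r k *
        (c k + (∑ j ∈ H, G k j * α j) + ∑ j ∈ Hᶜ, G k j * β j) ≤ d r := by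
  push_neg at hnot
  obtain ⟨r, hr⟩ := hnot
  intro h
  have hsum : ∑ k, C r k * (c k + (∑ j ∈ H, G k j * α j) + ∑ j ∈ Hᶜ, G k j * β j)
      = (∑ k, C r k * c k) + (∑ j ∈ H, (∑ k, C r k * G k j) * α j)
        + (∑ j ∈ Hᶜ, (∑ k, C r k * G k j) * β j) := by
    simp only [mul_add, Finset.sum_add_distrib, Finset.mul_sum, Finset.sum_mul]
    congr 1
    · congr 1
      rw [Finset.sum_comm]
      exact Finset.sum_congr rfl fun j _ => Finset.sum_congr rfl fun k _ => by ring
    · rw [Finset.sum_comm]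
      exact Finset.sum_congr rfl fun j _ => Finset.sum_congr rfl fun k _ => by ring
  have hβb : ∀ j ∈ Hᶜ, -(|∑ k, C r k * G k j|) ≤ (∑ k, C r k * G k j) * β j := by
    intro j _
    have h1 : |(∑ k, C r k * G k j) * β j| ≤ |∑ k, C r k * G k j| := by
      rw [abs_mul]
      have := (hβ j)
      have hb : |β j| ≤ 1 := abs_le.mpr ⟨this.1, this.2⟩
      nlinarith [abs_nonneg (∑ k, C r k * G k j)]
    linarith [neg_abs_le ((∑ k, C r k * G k j) * β j), (abs_le.mp h1).1]
  have hge : ∑ j ∈ Hᶜ, (∑ k, C r k * G k j) * β j ≥ -∑ j ∈ Hᶜ, |∑ k, C r k * G k j| := by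
    rw [← Finset.sum_neg_distrib]
    exact Finset.sum_le_sum hβb
  have := h r
  rw [hsum] at this
  linarith
end

section
/- The curvature enclosure converges to zero: for fixed i ≥ 0, bounded sets X₀ ⊂ ℝⁿ and vector ũ ∈ ℝⁿ, the set C_i(Δt) = (e^{AΔt})^i (F(Δt) X₀ ⊕ G(Δt) ũ) converges to {0} as Δt → 0, where F(Δt) = T^{(κ)}(Δt) A ⊕ E(Δt) and G(Δt) = T^{(κ+1)}(Δt) ⊕ E(Δt)Δt, with T^{(o)}(Δt) = ⊕ⱼ₌₂^o [(j^{−j/(j−1)} − j^{−1/(1−j)·(−1)}) Δtʲ, 0] A^{j−1}/j! an interval matrix whose entries scale like Δtʲ, and E(Δt) the Taylor remainder interval matrix. -/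
/-!
Write `C` for the number of coordinates and use the entrywise sup norm on matrices, for which
`‖M *ᵥ x‖ ≤ C ‖M‖ ‖x‖`. A matrix squeezed entrywise between `lo` and `hi` has norm at most
`max ‖lo‖ ‖hi‖`, so every point of the enclosure has norm at most
`C ‖e^{AΔt}^i‖ (C max ‖F̲‖ ‖F̄‖ R + C max ‖G̲‖ ‖Ḡ‖ ‖ũ‖)`, with `R` a bound for `X₀`.
The exponential factor stays bounded by continuity while the interval bounds tend to `0`,
so this bound tends to `0`.
-/

open Filter Topology Matrix

section Operator

open scoped Matrix.Norms.Operator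

theorem Matrix.continuous_exp_smul_pow {n : Type*} [Fintype n] [DecidableEq n]
    (A : Matrix n n ℝ) (i : ℕ) : Continuous fun t : ℝ => NormedSpace.exp (t • A) ^ i :=
  (NormedSpace.exp_continuous.comp (continuous_id.smul continuous_const)).pow i

end Operator

section Elementwise

open scoped Matrix.Norms.Elementwise

variable {m n : Type*} [Fintype m] [Fintype n]

theorem Matrix.norm_mulVec_le (M : Matrix m n ℝ) (x : n → ℝ) :
    ‖M *ᵥ x‖ ≤ Fintype.card n * ‖M‖ * ‖x‖ := by
  refine (pi_norm_le_iff_of_nonneg (by positivity)).mpr fun a => ?_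
  calc ‖(M *ᵥ x) a‖ = ‖∑ b, M a b * x b‖ := rfl
    _ ≤ ∑ b, ‖M a b‖ * ‖x b‖ := (norm_sum_le _ _).trans_eq (by simp only [norm_mul])
    _ ≤ ∑ _b : n, ‖M‖ * ‖x‖ := by
        gcongr with b
        · exact M.norm_entry_le_entrywise_sup_norm
        · exact norm_le_pi_norm x b
    _ = Fintype.card n * ‖M‖ * ‖x‖ := by simp [mul_assoc]

theorem Matrix.norm_le_max_of_entrywise_mem_Icc {lo M hi : Matrix m n ℝ}
    (h : ∀ a b, lo a b ≤ M a b ∧ M a b ≤ hi a b) : ‖M‖ ≤ max ‖lo‖ ‖hi‖ :=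
  (Matrix.norm_le_iff (by positivity)).mpr fun a b =>
    (abs_le_max_abs_abs (h a b).1 (h a b).2).trans <|
      max_le_max lo.norm_entry_le_entrywise_sup_norm hi.norm_entry_le_entrywise_sup_norm

theorem Matrix.tendsto_norm_zero_of_entrywise {α : Type*} {l : Filter α}
    {f : α → Matrix m n ℝ} (h : ∀ a b, Tendsto (fun t => f t a b) l (𝓝 0)) :
    Tendsto (fun t => ‖f t‖) l (𝓝 0) := by
  have hf : Tendsto f l (𝓝 0) := tendsto_pi_nhds.mpr fun a => tendsto_pi_nhds.mpr (h a)
  simpa using hf.norm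

end Elementwise

theorem curvature_enclosure_tendsto_zero_general (n : ℕ) (A : Matrix (Fin n) (Fin n) ℝ) (i : ℕ)
    (X₀ : Set (Fin n → ℝ)) (hX₀ : Bornology.IsBounded X₀)
    (u : Fin n → ℝ)
    (Flo Fhi Glo Ghi : ℝ → Matrix (Fin n) (Fin n) ℝ)
    (hFlo : ∀ a b : Fin n, Filter.Tendsto (fun Δt => Flo Δt a b) (nhds 0) (nhds 0))
    (hFhi : ∀ a b : Fin n, Filter.Tendsto (fun Δt => Fhi Δt a b) (nhds 0) (nhds 0))
    (hGlo : ∀ a b : Fin n, Filter.Tendsto (fun Δt => Glo Δt a b) (nhds 0) (nhds 0))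
    (hGhi : ∀ a b : Fin n, Filter.Tendsto (fun Δt => Ghi Δt a b) (nhds 0) (nhds 0)) :
    ∀ ε > 0, ∃ δ > 0, ∀ Δt : ℝ, 0 < Δt → Δt < δ →
      {y : Fin n → ℝ | ∃ (M N : Matrix (Fin n) (Fin n) ℝ) (x : Fin n → ℝ),
          (∀ a b, Flo Δt a b ≤ M a b ∧ M a b ≤ Fhi Δt a b) ∧
          (∀ a b, Glo Δt a b ≤ N a b ∧ N a b ≤ Ghi Δt a b) ∧
          x ∈ X₀ ∧
          y = ((NormedSpace.exp (Δt • A)) ^ i).mulVec (M.mulVec x + N.mulVec u)}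
        ⊆ Metric.ball (0 : Fin n → ℝ) ε := by
  open scoped Matrix.Norms.Elementwise in
  intro ε hε
  obtain ⟨R, hR⟩ := hX₀.exists_norm_le
  set C : ℝ := (Fintype.card (Fin n) : ℝ)
  set E : ℝ → Matrix (Fin n) (Fin n) ℝ := fun t => NormedSpace.exp (t • A) ^ i
  have hbound : Tendsto (fun t => C * ‖E t‖ *
      (C * max ‖Flo t‖ ‖Fhi t‖ * R + C * max ‖Glo t‖ ‖Ghi t‖ * ‖u‖)) (𝓝 0) (𝓝 0) := by
    have hE := ((Matrix.continuous_exp_smul_pow A i).tendsto 0).norm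
    have hF := (tendsto_norm_zero_of_entrywise hFlo).max (tendsto_norm_zero_of_entrywise hFhi)
    have hG := (tendsto_norm_zero_of_entrywise hGlo).max (tendsto_norm_zero_of_entrywise hGhi)
    simpa using (hE.const_mul C).mul (((hF.const_mul C).mul_const R).add
      ((hG.const_mul C).mul_const ‖u‖))
  obtain ⟨δ, hδ, hsmall⟩ := Metric.eventually_nhds_iff.mp (hbound.eventually (gt_mem_nhds hε))
  refine ⟨δ, hδ, fun t ht htδ => ?_⟩
  rintro _ ⟨M, N, x, hM, hN, hx, rfl⟩
  rw [mem_ball_zero_iff]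
  refine lt_of_le_of_lt ?_ (hsmall (by rwa [Real.dist_eq, sub_zero, abs_of_pos ht]))
  calc ‖E t *ᵥ (M *ᵥ x + N *ᵥ u)‖ ≤ C * ‖E t‖ * (C * ‖M‖ * ‖x‖ + C * ‖N‖ * ‖u‖) := by
        grw [norm_mulVec_le, norm_add_le, norm_mulVec_le, norm_mulVec_le]
    _ ≤ C * ‖E t‖ * (C * max ‖Flo t‖ ‖Fhi t‖ * R + C * max ‖Glo t‖ ‖Ghi t‖ * ‖u‖) := by
        gcongr
        · exact norm_le_max_of_entrywise_mem_Icc hM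
        · exact hR x hx
        · exact norm_le_max_of_entrywise_mem_Icc hN

/-- The curvature enclosure converges to zero: if `F(Δt)` and `G(Δt)` are interval matrices
whose lower and upper bound matrices converge entrywise to `0` as `Δt → 0`, then for fixed
`i ≥ 0`, a bounded set `X₀` and a vector `ũ`, the set
`C_i(Δt) = (e^{AΔt})^i (F(Δt) X₀ ⊕ G(Δt) ũ)` is contained in arbitrarily small balls around
`0` for sufficiently small `Δt > 0`. -/
theorem curvature_enclosure_tendsto_zero (n : ℕ) (A : Matrix (Fin n) (Fin n) ℝ) (i : ℕ)
    (X₀ : Set (Fin n → ℝ)) (hX₀ : Bornology.IsBounded X₀) (hX₀ne : X₀.Nonempty)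
    (u : Fin n → ℝ)
    (Flo Fhi Glo Ghi : ℝ → Matrix (Fin n) (Fin n) ℝ)
    (hFlo : ∀ a b : Fin n, Filter.Tendsto (fun Δt => Flo Δt a b) (nhds 0) (nhds 0))
    (hFhi : ∀ a b : Fin n, Filter.Tendsto (fun Δt => Fhi Δt a b) (nhds 0) (nhds 0))
    (hGlo : ∀ a b : Fin n, Filter.Tendsto (fun Δt => Glo Δt a b) (nhds 0) (nhds 0))
    (hGhi : ∀ a b : Fin n, Filter.Tendsto (fun Δt => Ghi Δt a b) (nhds 0) (nhds 0)) :
    ∀ ε > 0, ∃ δ > 0, ∀ Δt : ℝ, 0 < Δt → Δt < δ →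
      {y : Fin n → ℝ | ∃ (M N : Matrix (Fin n) (Fin n) ℝ) (x : Fin n → ℝ),
          (∀ a b, Flo Δt a b ≤ M a b ∧ M a b ≤ Fhi Δt a b) ∧
          (∀ a b, Glo Δt a b ≤ N a b ∧ N a b ≤ Ghi Δt a b) ∧
          x ∈ X₀ ∧
          y = ((NormedSpace.exp (Δt • A)) ^ i).mulVec (M.mulVec x + N.mulVec u)}
        ⊆ Metric.ball (0 : Fin n → ℝ) ε :=
  curvature_enclosure_tendsto_zero_general n A i X₀ hX₀ u Flo Fhi Glo Ghi hFlo hFhi hGlo hGhi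
end
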